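/- arXiv:1603.06725 — 2 statements merged into one kernel-verified Lean document; each statement's English description precedes it below -/
import Mathlib

section
/- Let k ≥ 1 and let A = (0, α_1, α_2, …) be a sequence of reals with α_j ≥ 1 and α_j − α_{j−1} ≥ 1 for all j ≥ 1. For n ≥ 0 define J_n = ∫_{[0,1]^k} (x_1⋯x_k)(x_1⋯x_k + α_1)⋯(x_1⋯x_k + α_{n−1}) dx_1⋯dx_k (with J_0 = 1). Then for all n ≥ 1, J_n^2 ≤ J_{n−1} J_{n+1}; i.e., the sequence {(−1)^n ĉ_{n,A}^{(k)}}_{n≥0} of signed multiparameter-poly-Cauchy numbers of the second kind is log-convex. -/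
open MeasureTheory

/-- Integral of `f (x₁ ⋯ x_k)` over the unit cube `[0,1]^k`. -/
noncomputable def cubeInt (k : ℕ) (f : ℝ → ℝ) : ℝ :=
  ∫ x : Fin k → ℝ in Set.univ.pi fun _ => Set.Icc (0:ℝ) 1, f (∏ i, x i)

/-!
Since `α` is increasing and nonnegative, the integrands `P_n(p) = ∏_{i<n} (p + α i)` satisfy
`P_n(p)² ≤ P_{n-1}(p) P_{n+1}(p)` pointwise for `p ≥ 0`, because
`(p + α (n-1))² ≤ (p + α (n-1)) (p + α n)`. Log-convexity survives integration by the
Cauchy–Schwarz inequality: `|∫ P_n| ≤ ∫ √P_{n-1} √P_{n+1} ≤ (∫ P_{n-1})^{1/2} (∫ P_{n+1})^{1/2}`.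
-/

section CauchySchwarz

variable {X : Type*} [MeasurableSpace X] {μ : Measure X}

lemma memLp_two_sqrt {g : X → ℝ} (hg : Integrable g μ) (hg0 : 0 ≤ᵐ[μ] g) :
    MemLp (fun x => √(g x)) (ENNReal.ofReal 2) μ := by
  rw [ENNReal.ofReal_ofNat, memLp_two_iff_integrable_sq
    (Real.continuous_sqrt.comp_aestronglyMeasurable hg.aestronglyMeasurable)]
  refine hg.congr ?_
  filter_upwards [hg0] with x hx
  exact (Real.sq_sqrt hx).symm

lemma integral_sqrt_sq {g : X → ℝ} (hg0 : 0 ≤ᵐ[μ] g) :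
    ∫ x, √(g x) ^ (2 : ℝ) ∂μ = ∫ x, g x ∂μ := by
  refine integral_congr_ae ?_
  filter_upwards [hg0] with x hx
  rw [Real.rpow_two, Real.sq_sqrt hx]

theorem sq_integral_le_integral_mul_integral {f g h : X → ℝ}
    (hg : Integrable g μ) (hh : Integrable h μ) (hg0 : 0 ≤ᵐ[μ] g) (hh0 : 0 ≤ᵐ[μ] h)
    (hfgh : ∀ᵐ x ∂μ, f x ^ 2 ≤ g x * h x) :
    (∫ x, f x ∂μ) ^ 2 ≤ (∫ x, g x ∂μ) * ∫ x, h x ∂μ := by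
  have hsg := memLp_two_sqrt hg hg0
  have hsh := memLp_two_sqrt hh hh0
  have hpq : Real.HolderConjugate 2 2 := by rw [Real.holderConjugate_iff]; norm_num
  have hprod : Integrable (fun x => √(g x) * √(h x)) μ := by
    rw [ENNReal.ofReal_ofNat] at hsg hsh
    exact hsg.integrable_mul hsh
  have hbound : |∫ x, f x ∂μ| ≤ ∫ x, √(g x) * √(h x) ∂μ := by
    refine abs_integral_le_integral_abs.trans (integral_mono_of_nonneg
      (Filter.Eventually.of_forall fun x => abs_nonneg _) hprod ?_)
    filter_upwards [hfgh, hg0] with x hx hgx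
    rw [← Real.sqrt_mul hgx]
    exact Real.abs_le_sqrt hx
  have holder := integral_mul_le_Lp_mul_Lq_of_nonneg hpq
    (Filter.Eventually.of_forall fun x => Real.sqrt_nonneg _)
    (Filter.Eventually.of_forall fun x => Real.sqrt_nonneg _) hsg hsh
  rw [integral_sqrt_sq hg0, integral_sqrt_sq hh0, ← Real.sqrt_eq_rpow, ← Real.sqrt_eq_rpow,
    ← Real.sqrt_mul (integral_nonneg_of_ae hg0)] at holder
  calc (∫ x, f x ∂μ) ^ 2 = |∫ x, f x ∂μ| ^ 2 := (sq_abs _).symm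
    _ ≤ √((∫ x, g x ∂μ) * ∫ x, h x ∂μ) ^ 2 :=
      pow_le_pow_left₀ (abs_nonneg _) (hbound.trans holder) 2
    _ = (∫ x, g x ∂μ) * ∫ x, h x ∂μ :=
      Real.sq_sqrt (mul_nonneg (integral_nonneg_of_ae hg0) (integral_nonneg_of_ae hh0))

end CauchySchwarz

lemma sq_prod_range_succ_le {a : ℕ → ℝ} {m : ℕ} (ha : ∀ i, 0 ≤ a i) (hm : a m ≤ a (m + 1)) :
    (∏ i ∈ Finset.range (m + 1), a i) ^ 2
      ≤ (∏ i ∈ Finset.range m, a i) * ∏ i ∈ Finset.range (m + 2), a i := by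
  have hP := Finset.prod_nonneg fun i (_ : i ∈ Finset.range m) => ha i
  simp only [Finset.prod_range_succ]
  nlinarith [mul_nonneg (mul_nonneg (mul_nonneg hP hP) (ha m)) (sub_nonneg.2 hm)]

lemma prod_mem_Icc_of_mem_cube {k : ℕ} {x : Fin k → ℝ}
    (hx : x ∈ Set.univ.pi fun _ => Set.Icc (0 : ℝ) 1) : ∏ i, x i ∈ Set.Icc (0 : ℝ) 1 :=
  ⟨Finset.prod_nonneg fun i _ => (hx i trivial).1,
    Finset.prod_le_one (fun i _ => (hx i trivial).1) fun i _ => (hx i trivial).2⟩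

lemma sq_cubeInt_le {k : ℕ} {F G H : ℝ → ℝ} (hG : Continuous G) (hH : Continuous H)
    (hG0 : ∀ p ∈ Set.Icc (0 : ℝ) 1, 0 ≤ G p) (hH0 : ∀ p ∈ Set.Icc (0 : ℝ) 1, 0 ≤ H p)
    (hFGH : ∀ p ∈ Set.Icc (0 : ℝ) 1, F p ^ 2 ≤ G p * H p) :
    cubeInt k F ^ 2 ≤ cubeInt k G * cubeInt k H := by
  have hcube : IsCompact (Set.univ.pi fun _ : Fin k => Set.Icc (0 : ℝ) 1) :=
    isCompact_univ_pi fun _ => isCompact_Icc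
  have hmeas : MeasurableSet (Set.univ.pi fun _ : Fin k => Set.Icc (0 : ℝ) 1) :=
    MeasurableSet.univ_pi fun _ => measurableSet_Icc
  have hprod : Continuous fun x : Fin k → ℝ => ∏ i, x i :=
    continuous_finsetProd _ fun i _ => continuous_apply i
  refine sq_integral_le_integral_mul_integral
    ((hG.comp hprod).continuousOn.integrableOn_compact hcube)
    ((hH.comp hprod).continuousOn.integrableOn_compact hcube)
    (ae_restrict_of_forall_mem hmeas fun x hx => hG0 _ (prod_mem_Icc_of_mem_cube hx))
    (ae_restrict_of_forall_mem hmeas fun x hx => hH0 _ (prod_mem_Icc_of_mem_cube hx))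
    (ae_restrict_of_forall_mem hmeas fun x hx => hFGH _ (prod_mem_Icc_of_mem_cube hx))

theorem stmt_7_general (k : ℕ) (α : ℕ → ℝ) (hα0 : α 0 = 0)
    (hαd : ∀ j : ℕ, 1 ≤ j → 1 ≤ α j - α (j - 1))
    (J : ℕ → ℝ)
    (hJ : ∀ n, J n = cubeInt k fun p => ∏ i ∈ Finset.range n, (p + α i)) :
    ∀ n : ℕ, 1 ≤ n → J n ^ 2 ≤ J (n - 1) * J (n + 1) := by
  intro n hn
  obtain ⟨m, rfl⟩ : ∃ m, n = m + 1 := ⟨n - 1, by omega⟩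
  have hmono : Monotone α := monotone_nat_of_le_succ fun j => by
    have hstep := hαd (j + 1) (Nat.le_add_left 1 j)
    rw [Nat.add_sub_cancel] at hstep
    linarith
  have hterm : ∀ p ∈ Set.Icc (0 : ℝ) 1, ∀ i, 0 ≤ p + α i := fun p hp i =>
    add_nonneg hp.1 (hα0 ▸ hmono (Nat.zero_le i))
  have hcont : ∀ n, Continuous fun p : ℝ => ∏ i ∈ Finset.range n, (p + α i) := fun n =>
    continuous_finsetProd _ fun i _ => continuous_id.add continuous_const
  rw [Nat.add_sub_cancel, hJ, hJ, hJ]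
  exact sq_cubeInt_le (hcont m) (hcont (m + 2))
    (fun p hp => Finset.prod_nonneg fun i _ => hterm p hp i)
    (fun p hp => Finset.prod_nonneg fun i _ => hterm p hp i)
    (fun p hp => sq_prod_range_succ_le (hterm p hp) (by linarith [hmono m.le_succ]))

/-- Multiparameter case, second kind: if `α 0 = 0`, `α j ≥ 1` and
`α j − α (j−1) ≥ 1` for `j ≥ 1`, then
`J n = ∫_{[0,1]^k} (p+α₀)(p+α₁)⋯(p+α_{n−1})` (so `J 0 = 1`) satisfies
`J n ^2 ≤ J (n−1) J (n+1)` for `n ≥ 1`. -/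
theorem stmt_7 (k : ℕ) (hk : 0 < k) (α : ℕ → ℝ) (hα0 : α 0 = 0)
    (hα1 : ∀ j : ℕ, 1 ≤ j → 1 ≤ α j)
    (hαd : ∀ j : ℕ, 1 ≤ j → 1 ≤ α j - α (j - 1))
    (J : ℕ → ℝ)
    (hJ : ∀ n, J n = cubeInt k fun p => ∏ i ∈ Finset.range n, (p + α i)) :
    ∀ n : ℕ, 1 ≤ n → J n ^ 2 ≤ J (n - 1) * J (n + 1) :=
  stmt_7_general k α hα0 hαd J hJ
end

section
/- For every positive integer k and every n ≥ 2, the poly-Cauchy number of the first kind c_n^{(k)} = ∫_{[0,1]^k} (x_1⋯x_k)(x_1⋯x_k − 1)⋯(x_1⋯x_k − n + 1) dx_1⋯dx_k has sign (−1)^{n−1}; i.e., (−1)^{n−1} c_n^{(k)} > 0. -/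
/-!
Since `(-1)^(n-1) (p)_n = p (1 - p) (2 - p) ⋯ (n - 1 - p)`, the integrand is nonnegative for
`p ∈ [0,1]` and positive for `p ∈ (0,1)`. For `k ≥ 1` the product `x₁ ⋯ x_k` lies in `(0,1)` on
the open cube, a set of measure `1`, so the integral of this continuous function is positive.
-/

open MeasureTheory

open Finset Set

lemma neg_one_pow_mul_prod_range_succ_sub (m : ℕ) (p : ℝ) :
    (-1) ^ m * ∏ i ∈ range (m + 1), (p - i) = p * ∏ i ∈ range m, ((i + 1 : ℝ) - p) := by
  have hpow : (-1 : ℝ) ^ m = ∏ _i ∈ range m, (-1 : ℝ) := by simp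
  rw [prod_range_succ', hpow, ← mul_assoc, ← prod_mul_distrib, mul_comm]
  push_cast
  ring_nf

lemma neg_one_pow_mul_prod_range_sub_nonneg (n : ℕ) {p : ℝ} (hp : p ∈ Icc (0 : ℝ) 1) :
    0 ≤ (-1) ^ (n - 1) * ∏ i ∈ range n, (p - i) := by
  cases n with
  | zero => simp
  | succ m =>
    rw [Nat.add_sub_cancel, neg_one_pow_mul_prod_range_succ_sub]
    exact mul_nonneg hp.1 (prod_nonneg fun i _ => by linarith [hp.2, (i.cast_nonneg : (0 : ℝ) ≤ i)])

lemma neg_one_pow_mul_prod_range_sub_pos (n : ℕ) {p : ℝ} (hp : p ∈ Ioo (0 : ℝ) 1) :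
    0 < (-1) ^ (n - 1) * ∏ i ∈ range n, (p - i) := by
  cases n with
  | zero => simp
  | succ m =>
    rw [Nat.add_sub_cancel, neg_one_pow_mul_prod_range_succ_sub]
    exact mul_pos hp.1 (prod_pos fun i _ => by linarith [hp.2, (i.cast_nonneg : (0 : ℝ) ≤ i)])

lemma prod_mem_Icc_of_mem_pi {k : ℕ} {x : Fin k → ℝ} (hx : x ∈ univ.pi fun _ => Icc (0 : ℝ) 1) :
    ∏ i, x i ∈ Icc (0 : ℝ) 1 :=
  ⟨prod_nonneg fun i _ => (hx i trivial).1,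
    prod_le_one (fun i _ => (hx i trivial).1) fun i _ => (hx i trivial).2⟩

lemma prod_mem_Ioo_of_mem_pi {k : ℕ} (hk : 0 < k) {x : Fin k → ℝ}
    (hx : x ∈ univ.pi fun _ => Ioo (0 : ℝ) 1) : ∏ i, x i ∈ Ioo (0 : ℝ) 1 := by
  refine ⟨prod_pos fun i _ => (hx i trivial).1, ?_⟩
  simpa using prod_lt_prod_of_nonempty (g := fun _ => (1 : ℝ)) (fun i _ => (hx i trivial).1)
    (fun i _ => (hx i trivial).2) (univ_nonempty_iff.2 (Fin.pos_iff_nonempty.1 hk))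

lemma cubeInt_pos {k : ℕ} (hk : 0 < k) {f : ℝ → ℝ} (hf : ContinuousOn f (Icc 0 1))
    (hf_nonneg : ∀ p ∈ Icc (0 : ℝ) 1, 0 ≤ f p) (hf_pos : ∀ p ∈ Ioo (0 : ℝ) 1, 0 < f p) :
    0 < cubeInt k f := by
  set cube := univ.pi fun _ : Fin k => Icc (0 : ℝ) 1
  have hint : IntegrableOn (fun x : Fin k → ℝ => f (∏ i, x i)) cube :=
    (hf.comp (by fun_prop) fun _ => prod_mem_Icc_of_mem_pi).integrableOn_compact
      (isCompact_univ_pi fun _ => isCompact_Icc)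
  have hnonneg : 0 ≤ᵐ[volume.restrict cube] fun x => f (∏ i, x i) :=
    (ae_restrict_iff' (MeasurableSet.univ_pi fun _ => measurableSet_Icc)).2 <|
      .of_forall fun x hx => hf_nonneg _ (prod_mem_Icc_of_mem_pi hx)
  have hsub : (univ.pi fun _ : Fin k => Ioo (0 : ℝ) 1) ⊆
      Function.support (fun x => f (∏ i, x i)) ∩ cube :=
    fun x hx => ⟨(hf_pos _ (prod_mem_Ioo_of_mem_pi hk hx)).ne',
      pi_mono (fun _ _ => Set.Ioo_subset_Icc_self) hx⟩
  rw [cubeInt, setIntegral_pos_iff_support_of_nonneg_ae hnonneg hint]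
  calc (0 : ENNReal) < 1 := one_pos
    _ = volume (univ.pi fun _ : Fin k => Ioo (0 : ℝ) 1) := by simp [volume_pi_pi]
    _ ≤ _ := measure_mono hsub

theorem stmt_11_general (k : ℕ) (hk : 0 < k) (n : ℕ) :
    0 < (-1 : ℝ) ^ (n - 1) * cubeInt k (fun p => ∏ i ∈ Finset.range n, (p - i)) := by
  rw [cubeInt, ← integral_const_mul]
  exact cubeInt_pos hk (by fun_prop) (fun p hp => neg_one_pow_mul_prod_range_sub_nonneg n hp)
    fun p hp => neg_one_pow_mul_prod_range_sub_pos n hp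

/-- For `k ≥ 1` and `n ≥ 2`, the poly-Cauchy number of the first kind
`c n = ∫_{[0,1]^k} (p)_n` has sign `(−1)^{n−1}`. -/
theorem stmt_11 (k : ℕ) (hk : 0 < k) (n : ℕ) (hn : 2 ≤ n) :
    0 < (-1 : ℝ) ^ (n - 1) * cubeInt k (fun p => ∏ i ∈ Finset.range n, (p - i)) :=
  stmt_11_general k hk n
end
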